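/- Let H₁, …, Hₙ be a line arrangement in general position on the torus ℝ²/ℤ², i.e. each Hᵢ is the image under the quotient map of an affine line in ℝ² with primitive direction hᵢ ∈ ℤ², no point of the torus lies on three of the lines, any two distinct lines whose directions are parallel (hᵢ = ±hⱼ) are disjoint, and not all of the directions are pairwise parallel. Then every connected component of the complement (ℝ²/ℤ²) \ (H₁ ∪ … ∪ Hₙ), equipped with the subspace topology, is homeomorphic to the open unit disc {x ∈ ℝ² : ‖x‖ < 1}. -/

import Mathlib

/-!
Lift to `ℝ²` along the quotient map `π = torusMk`. Writing `det2 u z = det(z, u)`, the preimage of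
the line with primitive direction `hᵢ` through `pᵢ` is the family of parallel lines
`det2 hᵢ z = det2 hᵢ pᵢ + k`, `k ∈ ℤ`. A component `C` of the complement of all these lines is the
intersection of the open half-planes containing one of its points, hence convex, and each
`det2 hᵢ` varies by less than `1` on `C`. Two non-parallel directions give two independent
determinants, so `C` is bounded, and for `a, b ∈ C` with `π a = π b` both determinants of the
lattice vector `b - a` are integers of absolute value `< 1`, so `a = b`. As `π` is an open map
whose fibres are lattice orbits, the component of the complement on the torus is `π(C) ≃ₜ C`,
a bounded open convex planar set.
-/

/-- The integer lattice `ℤ² ⊆ ℝ²` as an additive subgroup of `Fin 2 → ℝ`. -/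
def intLattice : AddSubgroup (Fin 2 → ℝ) where
  carrier := {x | ∀ i, ∃ m : ℤ, x i = (m : ℝ)}
  zero_mem' := fun i => ⟨0, by simp⟩
  add_mem' := by
    intro a b ha hb i
    obtain ⟨p, hp⟩ := ha i
    obtain ⟨q, hq⟩ := hb i
    exact ⟨p + q, by simp [hp, hq]⟩
  neg_mem' := by
    intro a ha i
    obtain ⟨p, hp⟩ := ha i
    exact ⟨-p, by simp [hp]⟩

/-- The torus `ℝ²/ℤ²` (with the quotient topology). -/
abbrev Torus2 : Type := (Fin 2 → ℝ) ⧸ intLattice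

/-- The quotient map `π : ℝ² → ℝ²/ℤ²`. -/
def torusMk : (Fin 2 → ℝ) → Torus2 := QuotientAddGroup.mk

/-- The closed geodesic (line) on the torus with base point `p ∈ ℝ²` and direction
`u ∈ ℤ²`: the image `π({p + t·u : t ∈ ℝ})`. -/
def torusGeodesic (p : Fin 2 → ℝ) (u : Fin 2 → ℤ) : Set Torus2 :=
  torusMk '' {x : Fin 2 → ℝ | ∃ t : ℝ, x = p + t • (fun i => (u i : ℝ))}

open Set Metric Bornology

theorem IsPreconnected.lt_iff_lt_of_notMem {T : Set ℝ} (hT : IsPreconnected T) {c : ℝ}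
    (hc : c ∉ T) {a b : ℝ} (ha : a ∈ T) (hb : b ∈ T) : a < c ↔ b < c := by
  have key : ∀ a ∈ T, ∀ b ∈ T, a < c → b < c := fun a ha b hb hac => by
    by_contra! hcb
    exact hc (hT.Icc_subset ha hb ⟨hac.le, hcb⟩)
  exact ⟨key a ha b hb, key b hb a ha⟩

theorem IsPreconnected.abs_sub_lt_one {T : Set ℝ} (hT : IsPreconnected T) {c : ℝ}
    (hc : ∀ k : ℤ, c + k ∉ T) {a b : ℝ} (ha : a ∈ T) (hb : b ∈ T) : |b - a| < 1 := by
  have key : ∀ a ∈ T, ∀ b ∈ T, b - a < 1 := fun a ha b hb => by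
    by_contra! hab
    refine hc ⌈a - c⌉ (hT.Icc_subset ha hb ⟨?_, ?_⟩)
    · linarith [Int.le_ceil (a - c)]
    · linarith [Int.ceil_lt_add_one (a - c)]
  exact abs_sub_lt_iff.2 ⟨key a ha b hb, key b hb a ha⟩

section Hyperplanes

variable {E ι : Type*} [AddCommGroup E] [Module ℝ E] [TopologicalSpace E]
  [IsTopologicalAddGroup E] [ContinuousSMul ℝ E]

theorem convex_connectedComponentIn_setOf_forall_ne (f : ι → E →L[ℝ] ℝ) (c : ι → ℝ) (x : E) :
    Convex ℝ (connectedComponentIn {z | ∀ i, f i z ≠ c i} x) := by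
  set U := {z | ∀ i, f i z ≠ c i}
  by_cases hx : x ∈ U
  swap
  · rw [connectedComponentIn_eq_empty hx]
    exact convex_empty
  set P := {z | ∀ i, f i z ≠ c i ∧ (f i z < c i ↔ f i x < c i)}
  have hPconv : Convex ℝ P := by
    have : P = ⋂ i, if f i x < c i then {z | f i z < c i} else {z | c i < f i z} := by
      ext z
      simp only [P, mem_ofPred_eq, mem_iInter]
      refine forall_congr' fun i => ?_
      split_ifs with hi
      · simp only [hi, iff_true]
        exact ⟨And.right, fun h => ⟨h.ne, h⟩⟩
      · simp only [hi, iff_false, not_lt]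
        exact ⟨fun h => lt_of_le_of_ne h.2 (Ne.symm h.1), fun h => ⟨h.ne', h.le⟩⟩
    rw [this]
    refine convex_iInter fun i => ?_
    split_ifs
    · exact convex_halfSpace_lt (f i).isLinear _
    · exact convex_halfSpace_gt (f i).isLinear _
  have hPU : P ⊆ U := fun z hz i => (hz i).1
  have hCP : connectedComponentIn U x ⊆ P := fun z hz i => by
    have hfC := (isPreconnected_connectedComponentIn (F := U) (x := x)).image _
      (f i).continuous.continuousOn
    refine ⟨connectedComponentIn_subset U x hz i, (hfC.lt_iff_lt_of_notMem ?_
      (mem_image_of_mem _ (mem_connectedComponentIn hx)) (mem_image_of_mem _ hz)).symm⟩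
    rintro ⟨w, hw, hwc⟩
    exact connectedComponentIn_subset U x hw i hwc
  have hPC : P ⊆ connectedComponentIn U x :=
    hPconv.isPreconnected.subset_connectedComponentIn (fun i => ⟨hx i, Iff.rfl⟩) hPU
  rwa [hCP.antisymm hPC]

end Hyperplanes

theorem QuotientAddGroup.image_add_connectedComponentIn_preimage_subset {G : Type*} [AddGroup G]
    [TopologicalSpace G] [ContinuousAdd G] {Γ : AddSubgroup G} {V : Set (G ⧸ Γ)} {w γ : G}
    (hw : (w : G ⧸ Γ) ∈ V) (hγ : γ ∈ Γ) :
    (· + γ) '' connectedComponentIn ((↑) ⁻¹' V) w ⊆ connectedComponentIn ((↑) ⁻¹' V) (w + γ) := by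
  refine (isPreconnected_connectedComponentIn.image _
    (continuous_add_const γ).continuousOn).subset_connectedComponentIn
    (mem_image_of_mem _ (mem_connectedComponentIn hw)) ?_
  rintro _ ⟨a, ha, rfl⟩
  show ((a + γ : G) : G ⧸ Γ) ∈ V
  rw [QuotientAddGroup.mk_add_of_mem a hγ]
  exact connectedComponentIn_subset ((↑) ⁻¹' V) w ha

theorem QuotientAddGroup.connectedComponentIn_eq_image {G : Type*} [AddGroup G]
    [TopologicalSpace G] [IsTopologicalAddGroup G] [LocallyConnectedSpace G] {Γ : AddSubgroup G}
    {V : Set (G ⧸ Γ)} (hV : IsOpen V) (x : G) :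
    connectedComponentIn V (x : G ⧸ Γ) = (↑) '' connectedComponentIn ((↑) ⁻¹' V) x := by
  set π : G → G ⧸ Γ := (↑)
  set W := π ⁻¹' V
  have hW : IsOpen W := hV.preimage continuous_quot_mk
  by_cases hx : x ∈ W
  swap
  · rw [connectedComponentIn_eq_empty (F := V) hx, connectedComponentIn_eq_empty (F := W) hx,
      image_empty]
  -- The saturation of `connectedComponentIn W x` is the union of its `Γ`-translates, each a
  -- component of `W`, so its complement in `W` is a union of components.
  have hrest : IsOpen (W \ π ⁻¹' (π '' connectedComponentIn W x)) := by
    refine isOpen_iff_mem_nhds.2 fun z hz => Filter.mem_of_superset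
      (hW.connectedComponentIn.mem_nhds (mem_connectedComponentIn hz.1)) fun w hw => ?_
    refine ⟨connectedComponentIn_subset W z hw, fun ⟨c, hc, hwc⟩ => hz.2 ?_⟩
    obtain ⟨γ, hγ, rfl⟩ : ∃ γ ∈ Γ, w + γ = c :=
      ⟨-w + c, QuotientAddGroup.eq.1 hwc.symm, add_neg_cancel_left w c⟩
    have hzw : z ∈ connectedComponentIn W w := by
      rw [← connectedComponentIn_eq hw]; exact mem_connectedComponentIn hz.1
    refine ⟨z + γ, ?_, QuotientAddGroup.mk_add_of_mem z hγ⟩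
    rw [connectedComponentIn_eq hc]
    exact image_add_connectedComponentIn_preimage_subset (connectedComponentIn_subset W z hw) hγ
      (mem_image_of_mem _ hzw)
  have hπ : IsOpenMap π := QuotientAddGroup.isOpenMap_coe
  refine subset_antisymm ?_ ?_
  · refine isPreconnected_connectedComponentIn.subset_left_of_subset_union
      (hπ _ hW.connectedComponentIn) (hπ _ hrest) ?_ ?_
      ⟨π x, mem_connectedComponentIn hx, mem_image_of_mem _ (mem_connectedComponentIn hx)⟩
    · refine disjoint_left.2 ?_
      rintro _ ⟨c, hc, rfl⟩ ⟨w, hw, hwc⟩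
      exact hw.2 (by rw [mem_preimage, hwc]; exact mem_image_of_mem π hc)
    · intro y hy
      obtain ⟨z, rfl⟩ := QuotientAddGroup.mk_surjective y
      by_cases hzC : π z ∈ π '' connectedComponentIn W x
      · exact Or.inl hzC
      · exact Or.inr ⟨z, ⟨connectedComponentIn_subset V _ hy, hzC⟩, rfl⟩
  · exact (isPreconnected_connectedComponentIn.image π
      continuous_quot_mk.continuousOn).subset_connectedComponentIn
      (mem_image_of_mem _ (mem_connectedComponentIn hx))
      ((image_mono (connectedComponentIn_subset _ _)).trans (image_preimage_subset _ _))

theorem IsOpenMap.nonempty_homeomorph_image_of_injOn {X Y : Type*} [TopologicalSpace X]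
    [TopologicalSpace Y] {f : X → Y} (hf : Continuous f) (hfo : IsOpenMap f) {s : Set X}
    (hs : IsOpen s) (hinj : InjOn f s) : Nonempty (s ≃ₜ f '' s) :=
  ⟨(Topology.IsOpenEmbedding.of_continuous_injective_isOpenMap (hf.comp continuous_subtype_val)
    hinj.injective (hfo.domRestrict hs)).toIsEmbedding.toHomeomorph.trans
    (Homeomorph.setCongr (range_domRestrict f s))⟩

theorem Convex.nonempty_homeomorph_unitBall {E : Type*} [NormedAddCommGroup E] [NormedSpace ℝ E]
    {s : Set E} (hc : Convex ℝ s) (ho : IsOpen s) (hne : s.Nonempty) (hb : IsBounded s) :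
    Nonempty (s ≃ₜ ball (0 : E) 1) := by
  obtain ⟨h, hh, -, -⟩ :=
    exists_homeomorph_image_interior_closure_frontier_eq_unitBall hc (by rwa [ho.interior_eq]) hb
  rw [ho.interior_eq] at hh
  exact ⟨(h.image s).trans (Homeomorph.setCongr hh)⟩

theorem Convex.nonempty_homeomorph_euclideanBall {ι : Type*} [Fintype ι] {s : Set (ι → ℝ)}
    (hc : Convex ℝ s) (ho : IsOpen s) (hne : s.Nonempty) (hb : IsBounded s) :
    Nonempty (s ≃ₜ ball (0 : EuclideanSpace ℝ ι) 1) := by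
  let φ := (EuclideanSpace.equiv ι ℝ).symm
  obtain ⟨e⟩ := (hc.linear_image φ.toLinearEquiv.toLinearMap).nonempty_homeomorph_unitBall
    (φ.toHomeomorph.isOpenMap s ho) (hne.image φ) (φ.lipschitz.isBounded_image hb)
  exact ⟨(φ.toHomeomorph.image s).trans e⟩

section PeriodicArrangement

variable {E ι : Type*} [AddCommGroup E] [Module ℝ E] [TopologicalSpace E]

def periodicArrangementCompl (f : ι → E →L[ℝ] ℝ) (c : ι → ℝ) : Set E :=
  {z | ∀ i (k : ℤ), f i z ≠ c i + k}

theorem isOpen_periodicArrangementCompl [Finite ι] (f : ι → E →L[ℝ] ℝ) (c : ι → ℝ) :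
    IsOpen (periodicArrangementCompl f c) := by
  have : periodicArrangementCompl f c = ⋂ i, (fun z => f i z - c i) ⁻¹' (range ((↑) : ℤ → ℝ))ᶜ := by
    ext z
    simp [periodicArrangementCompl, eq_sub_iff_add_eq', eq_comm]
  rw [this]
  exact isOpen_iInter_of_finite fun i =>
    Int.isClosedEmbedding_coe_real.isClosed_range.isOpen_compl.preimage
      ((f i).continuous.sub continuous_const)

theorem abs_sub_lt_one_of_mem_connectedComponentIn {f : ι → E →L[ℝ] ℝ} {c : ι → ℝ} {x a b : E}
    (ha : a ∈ connectedComponentIn (periodicArrangementCompl f c) x)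
    (hb : b ∈ connectedComponentIn (periodicArrangementCompl f c) x) (i : ι) :
    |f i b - f i a| < 1 :=
  (isPreconnected_connectedComponentIn.image _ (f i).continuous.continuousOn).abs_sub_lt_one
    (fun k ⟨_, hz, hzk⟩ => connectedComponentIn_subset _ _ hz i k hzk)
    (mem_image_of_mem _ ha) (mem_image_of_mem _ hb)

theorem isBounded_image_connectedComponentIn_periodicArrangementCompl (f : ι → E →L[ℝ] ℝ)
    (c : ι → ℝ) (x : E) (i : ι) :
    IsBounded (f i '' connectedComponentIn (periodicArrangementCompl f c) x) := by
  refine isBounded_iff.2 ⟨1, ?_⟩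
  rintro _ ⟨a, ha, rfl⟩ _ ⟨b, hb, rfl⟩
  exact (abs_sub_lt_one_of_mem_connectedComponentIn hb ha i).le

theorem convex_connectedComponentIn_periodicArrangementCompl [IsTopologicalAddGroup E]
    [ContinuousSMul ℝ E] (f : ι → E →L[ℝ] ℝ) (c : ι → ℝ) (x : E) :
    Convex ℝ (connectedComponentIn (periodicArrangementCompl f c) x) := by
  have : periodicArrangementCompl f c = {z | ∀ ik : ι × ℤ, f ik.1 z ≠ c ik.1 + ik.2} := by
    ext z
    simp [periodicArrangementCompl]
  rw [this]
  exact convex_connectedComponentIn_setOf_forall_ne _ _ x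

end PeriodicArrangement

noncomputable def det2 (u : Fin 2 → ℝ) : (Fin 2 → ℝ) →L[ℝ] ℝ :=
  u 1 • ContinuousLinearMap.proj 0 - u 0 • ContinuousLinearMap.proj 1

theorem det2_apply (u x : Fin 2 → ℝ) : det2 u x = u 1 * x 0 - u 0 * x 1 := rfl

theorem det2_self (u : Fin 2 → ℝ) : det2 u u = 0 := by
  rw [det2_apply]; ring

theorem det2_smul_eq_sub (u v x : Fin 2 → ℝ) :
    det2 v u • x = det2 v x • u - det2 u x • v := by
  ext i; fin_cases i <;> simp [det2_apply] <;> ring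

theorem eq_zero_of_det2_eq_zero {u v x : Fin 2 → ℝ} (huv : det2 v u ≠ 0)
    (hu : det2 u x = 0) (hv : det2 v x = 0) : x = 0 := by
  have := det2_smul_eq_sub u v x
  rw [hu, hv, zero_smul, zero_smul, sub_zero] at this
  exact (smul_eq_zero.1 this).resolve_left huv

theorem exists_eq_smul_of_det2_eq_zero {u x : Fin 2 → ℝ} (hu : u ≠ 0) (hx : det2 u x = 0) :
    ∃ t : ℝ, x = t • u := by
  obtain ⟨i, hi⟩ := Function.ne_iff.1 hu
  refine ⟨x i / u i, funext fun j => ?_⟩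
  rw [det2_apply] at hx
  fin_cases i <;> fin_cases j <;> simp at hi ⊢ <;> field_simp <;> linarith

theorem isBounded_of_det2_ne_zero {u v : Fin 2 → ℝ} (huv : det2 v u ≠ 0) {S : Set (Fin 2 → ℝ)}
    (hu : IsBounded (det2 u '' S)) (hv : IsBounded (det2 v '' S)) : IsBounded S := by
  let T : ℝ × ℝ →L[ℝ] (Fin 2 → ℝ) := (det2 v u)⁻¹ •
    ((ContinuousLinearMap.fst ℝ ℝ ℝ).smulRight u - (ContinuousLinearMap.snd ℝ ℝ ℝ).smulRight v)
  refine (T.lipschitz.isBounded_image (hv.prod hu)).subset fun x hx => ⟨(det2 v x, det2 u x),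
    ⟨mem_image_of_mem _ hx, mem_image_of_mem _ hx⟩, ?_⟩
  simp only [T, smul_apply, sub_apply,
    ContinuousLinearMap.smulRight_apply, ContinuousLinearMap.coe_fst', ContinuousLinearMap.coe_snd']
  rw [← det2_smul_eq_sub, smul_smul, inv_mul_cancel₀ huv, one_smul]

theorem exists_det2_eq_intCast_of_mem_intLattice (u : Fin 2 → ℤ) {m : Fin 2 → ℝ}
    (hm : m ∈ intLattice) : ∃ k : ℤ, det2 (fun i => (u i : ℝ)) m = k := by
  choose a ha using (hm : ∀ i, ∃ k : ℤ, m i = k)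
  exact ⟨u 1 * a 0 - u 0 * a 1, by rw [det2_apply, ha 0, ha 1]; push_cast; ring⟩

theorem exists_mem_intLattice_det2_eq {u : Fin 2 → ℤ} (hu : Int.gcd (u 0) (u 1) = 1) (k : ℤ) :
    ∃ m ∈ intLattice, det2 (fun i => (u i : ℝ)) m = k := by
  obtain ⟨s, t, hst⟩ := Int.isCoprime_iff_gcd_eq_one.2 hu
  refine ⟨fun i => ((![k * t, -(k * s)] i : ℤ) : ℝ), fun i => ⟨_, rfl⟩, ?_⟩
  rw [det2_apply]
  simp only [Matrix.cons_val_zero, Matrix.cons_val_one]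
  have hst' : (s : ℝ) * u 0 + t * u 1 = 1 := by exact_mod_cast hst
  push_cast
  linear_combination (k : ℝ) * hst'

theorem det2_intCast_ne_zero {a b : Fin 2 → ℤ} (ha : Int.gcd (a 0) (a 1) = 1)
    (hb : Int.gcd (b 0) (b 1) = 1) (hab : a ≠ b) (hab' : a ≠ -b) :
    det2 (fun i => (b i : ℝ)) (fun i => (a i : ℝ)) ≠ 0 := by
  rw [det2_apply]
  norm_cast
  intro heq
  obtain ⟨s, t, hst⟩ := Int.isCoprime_iff_gcd_eq_one.2 ha
  set k := s * b 0 + t * b 1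
  have hb0 : b 0 = k * a 0 := by linear_combination (-b 0) * hst - t * heq
  have hb1 : b 1 = k * a 1 := by linear_combination (-b 1) * hst + s * heq
  have hk : Int.gcd (b 0) (b 1) = k.natAbs * Int.gcd (a 0) (a 1) := by
    rw [hb0, hb1, Int.gcd_mul_left]
  rw [hb, ha, mul_one] at hk
  rcases Int.natAbs_eq_iff.1 hk.symm with hk | hk
  · exact hab (funext fun i => by fin_cases i <;> simp [hb0, hb1, hk])
  · exact hab' (funext fun i => by fin_cases i <;> simp [hb0, hb1, hk])

theorem torusMk_eq_torusMk_iff {a b : Fin 2 → ℝ} : torusMk a = torusMk b ↔ -a + b ∈ intLattice :=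
  QuotientAddGroup.eq

theorem torusMk_mem_torusGeodesic_iff {u : Fin 2 → ℤ} (hu : Int.gcd (u 0) (u 1) = 1)
    (p z : Fin 2 → ℝ) : torusMk z ∈ torusGeodesic p u ↔
      ∃ k : ℤ, det2 (fun i => (u i : ℝ)) z = det2 (fun i => (u i : ℝ)) p + k := by
  set v : Fin 2 → ℝ := fun i => (u i : ℝ)
  constructor
  · rintro ⟨w, ⟨t, rfl⟩, hw⟩
    obtain ⟨k, hk⟩ := exists_det2_eq_intCast_of_mem_intLattice u (torusMk_eq_torusMk_iff.1 hw)
    refine ⟨k, ?_⟩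
    rw [map_add, map_neg, map_add, map_smul, det2_self, smul_zero, add_zero] at hk
    linarith
  · rintro ⟨k, hk⟩
    have hv : v ≠ 0 := fun hv => by
      have h0 : ∀ i, u i = 0 := fun i => by simpa [v] using congrFun hv i
      simp [h0 0, h0 1] at hu
    obtain ⟨m, hm, hmk⟩ := exists_mem_intLattice_det2_eq hu (-k)
    obtain ⟨t, ht⟩ := exists_eq_smul_of_det2_eq_zero hv
      (show det2 v (z + m - p) = 0 by rw [map_sub, map_add, hk, hmk]; push_cast; ring)
    refine ⟨z + m, ⟨t, by rw [← ht]; abel⟩, torusMk_eq_torusMk_iff.2 ?_⟩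
    rw [neg_add_rev, neg_add_cancel_right]
    exact neg_mem hm

theorem isBounded_connectedComponentIn_periodicArrangementCompl {ι : Type*}
    {u : ι → Fin 2 → ℝ} {i j : ι} (hij : det2 (u j) (u i) ≠ 0) (c : ι → ℝ) (x : Fin 2 → ℝ) :
    IsBounded (connectedComponentIn (periodicArrangementCompl (fun l => det2 (u l)) c) x) :=
  isBounded_of_det2_ne_zero hij
    (isBounded_image_connectedComponentIn_periodicArrangementCompl _ c x i)
    (isBounded_image_connectedComponentIn_periodicArrangementCompl _ c x j)

theorem injOn_torusMk_connectedComponentIn {ι : Type*} {u : ι → Fin 2 → ℤ} {i j : ι}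
    (hij : det2 (fun k => (u j k : ℝ)) (fun k => (u i k : ℝ)) ≠ 0) (c : ι → ℝ) (x : Fin 2 → ℝ) :
    InjOn torusMk (connectedComponentIn
      (periodicArrangementCompl (fun l => det2 (fun k => (u l k : ℝ))) c) x) := by
  intro a ha b hb hab
  have hzero : ∀ l, det2 (fun k => (u l k : ℝ)) (-a + b) = 0 := fun l => by
    obtain ⟨k, hk⟩ := exists_det2_eq_intCast_of_mem_intLattice (u l) (torusMk_eq_torusMk_iff.1 hab)
    have hlt := abs_sub_lt_one_of_mem_connectedComponentIn ha hb l
    rw [map_add, map_neg, neg_add_eq_sub] at hk ⊢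
    rw [hk] at hlt ⊢
    exact_mod_cast Int.abs_lt_one_iff.1 (by exact_mod_cast hlt)
  exact neg_add_eq_zero.1 (eq_zero_of_det2_eq_zero hij (hzero i) (hzero j))

theorem preimage_torusMk_compl_iUnion_torusGeodesic {ι : Type*} {u : ι → Fin 2 → ℤ}
    (hu : ∀ i, Int.gcd (u i 0) (u i 1) = 1) (p : ι → Fin 2 → ℝ) :
    torusMk ⁻¹' (⋃ i, torusGeodesic (p i) (u i))ᶜ =
      periodicArrangementCompl (fun i => det2 (fun k => (u i k : ℝ)))
        (fun i => det2 (fun k => (u i k : ℝ)) (p i)) := by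
  ext z
  simp [periodicArrangementCompl, torusMk_mem_torusGeodesic_iff (hu _)]

theorem stmt_5_general (n : ℕ) (h : Fin n → Fin 2 → ℤ) (p : Fin n → Fin 2 → ℝ)
    (L : Fin n → Set Torus2) (hL : ∀ i, L i = torusGeodesic (p i) (h i))
    (hprim : ∀ i, Int.gcd (h i 0) (h i 1) = 1)
    (hnpar : ∃ i j, h i ≠ h j ∧ h i ≠ -h j) :
    ∀ x ∈ (⋃ i, L i)ᶜ,
      Nonempty (↥(connectedComponentIn (⋃ i, L i)ᶜ x) ≃ₜ
        ↥(Metric.ball (0 : EuclideanSpace ℝ (Fin 2)) 1)) := by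
  obtain rfl : L = fun i => torusGeodesic (p i) (h i) := funext hL
  intro y hy
  obtain ⟨x, rfl⟩ : ∃ x, torusMk x = y := QuotientAddGroup.mk_surjective y
  obtain ⟨i, j, hij, hij'⟩ := hnpar
  have hdet := det2_intCast_ne_zero (hprim i) (hprim j) hij hij'
  have hW := preimage_torusMk_compl_iUnion_torusGeodesic hprim p
  have hWo := isOpen_periodicArrangementCompl (fun i => det2 (fun k => (h i k : ℝ)))
    (fun i => det2 (fun k => (h i k : ℝ)) (p i))
  have hcomp : connectedComponentIn (⋃ i, torusGeodesic (p i) (h i))ᶜ (torusMk x) =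
      torusMk '' connectedComponentIn (torusMk ⁻¹' (⋃ i, torusGeodesic (p i) (h i))ᶜ) x :=
    QuotientAddGroup.connectedComponentIn_eq_image
      ((QuotientAddGroup.isQuotientMap_mk _).isOpen_preimage.1 (hW ▸ hWo)) x
  rw [hcomp, hW]
  have hCo := hWo.connectedComponentIn (x := x)
  obtain ⟨e₁⟩ := QuotientAddGroup.isOpenMap_coe.nonempty_homeomorph_image_of_injOn
    continuous_quot_mk hCo (injOn_torusMk_connectedComponentIn hdet _ x)
  obtain ⟨e₂⟩ := Convex.nonempty_homeomorph_euclideanBall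
    (convex_connectedComponentIn_periodicArrangementCompl _ _ x) hCo
    ⟨x, mem_connectedComponentIn (hW ▸ hy)⟩
    (isBounded_connectedComponentIn_periodicArrangementCompl hdet _ x)
  exact ⟨e₁.symm.trans e₂⟩

/-- Every connected component of the complement of a line arrangement in
general position on the torus is homeomorphic to the open unit disc in `ℝ²`. -/
theorem stmt_5 (n : ℕ) (h : Fin n → Fin 2 → ℤ) (p : Fin n → Fin 2 → ℝ)
    (L : Fin n → Set Torus2) (hL : ∀ i, L i = torusGeodesic (p i) (h i))
    (hprim : ∀ i, Int.gcd (h i 0) (h i 1) = 1)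
    (hthree : ∀ x : Torus2, {i : Fin n | x ∈ L i}.ncard ≤ 2)
    (hpar : ∀ i j, i ≠ j → (h i = h j ∨ h i = -h j) → Disjoint (L i) (L j))
    (hnpar : ∃ i j, h i ≠ h j ∧ h i ≠ -h j) :
    ∀ x ∈ (⋃ i, L i)ᶜ,
      Nonempty (↥(connectedComponentIn (⋃ i, L i)ᶜ x) ≃ₜ
        ↥(Metric.ball (0 : EuclideanSpace ℝ (Fin 2)) 1)) :=
  stmt_5_general n h p L hL hprim hnpar
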